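/- arXiv:math/0605523 — 2 statements merged into one kernel-verified Lean document; each statement's English description precedes it below -/
import Mathlib

section
/- Let G = 𝔽₂ⁿ and A, B ⊆ G nonempty with |A+B| ≤ K|B|. Let α = |A|/2ⁿ. Then at least one of the following holds: (i) B+B+B+B contains a subspace of codimension at most C·K^(1/2) for an absolute constant C; or (ii) there exist a codimension-1 subspace W ≤ G, elements x,y ∈ G, and sets A', B' ⊆ W such that x+A' ⊆ A, y+B' ⊆ B, |A'|/|W| ≥ α(1 + 2^(−3/2)K^(−1/2)), and |A'+B'| ≤ K|B'|. -/
/-!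
For an `𝔽₂`-vector space `G`, the characters are `χ_φ x = (-1)^(φ x)` (`walshChar φ x`) for
linear functionals `φ`, and `Ŝ(φ) = ∑_{x ∈ S} χ_φ x` (`charSum S φ`).

If some `φ ≠ 0` has `|Â(φ)| ≥ ε|A|`, one coset of `ker φ` contains at least `(1 + ε)|A|/2` points
of `A`. The sets `A_c + B_{c'}` lie in distinct cosets of `ker φ`, so some fibre `B_{c'}` still has
`|A_c + B_{c'}| ≤ K|B_{c'}|`; translating both fibres into `ker φ` gives the density increment.

Otherwise every nontrivial coefficient of `A` is below `ε|A|`, with `ε² = 1/(8K)`. Comparing the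
Fourier expansion of the additive energy `E(A, B)` with `|A|²|B|² ≤ |A + B| E(A, B)` forces
`|B| ≥ 7|G|/(8K)`. A set `B` of density `δ` has `B + B + B + B` containing a subspace of codimension
at most `4/√δ`. If every `B̂(φ)²` with `φ ≠ 0` is at most `δ|B|²`, the Fourier expansion of the
number of representations `x = b₁ + b₂ + b₃ + b₄` is positive for every `x`. Otherwise `B` has
density at least `δ(1 + √δ)` on a coset of a hyperplane, and we recurse inside the hyperplane: the
potential `4/√δ` then drops by at least one.
-/

open Finset Pointwise Module

noncomputable def signChar : AddChar (ZMod 2) ℝ := AddChar.zmodChar 2 (ζ := (-1 : ℝ)) (by norm_num)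

lemma signChar_one : signChar 1 = -1 := by
  simp [signChar, AddChar.zmodChar_apply, ZMod.val_one]

lemma signChar_eq_one_iff {c : ZMod 2} : signChar c = 1 ↔ c = 0 := by
  obtain rfl | rfl : c = 0 ∨ c = 1 := by decide +revert
  all_goals norm_num [signChar_one]

lemma neg_one_le_signChar (c : ZMod 2) : -1 ≤ signChar c := by
  obtain rfl | rfl : c = 0 ∨ c = 1 := by decide +revert
  all_goals norm_num [signChar_one]

namespace ZModModule

variable {G : Type*} [AddCommGroup G] [Module (ZMod 2) G]

lemma add_eq_zero_iff_eq {a b : G} : a + b = 0 ↔ a = b := by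
  rw [add_eq_zero_iff_eq_neg, neg_eq_self]

lemma add_add_add_eq_zero_iff {a b c d : G} : a + b + (c + d) = 0 ↔ a + c = b + d := by
  rw [add_add_add_comm, add_eq_zero_iff_eq]

variable [DecidableEq G]

lemma vadd_vadd_finset_self (x : G) (S : Finset G) : x +ᵥ (x +ᵥ S) = S := by
  rw [vadd_vadd, add_self, zero_vadd]

lemma add_add_add_vadd_finset (x : G) (S : Finset G) :
    (x +ᵥ S) + (x +ᵥ S) + (x +ᵥ S) + (x +ᵥ S) = S + S + S + S := by
  have h : (x +ᵥ S) + (x +ᵥ S) = S + S := by rw [vadd_add_vadd_comm, add_self, zero_vadd]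
  rw [add_assoc _ (x +ᵥ S), h, ← add_assoc]

end ZModModule

section Fourier

variable {G : Type*} [AddCommGroup G] [Module (ZMod 2) G]

noncomputable def walshChar (φ : Dual (ZMod 2) G) : AddChar G ℝ :=
  signChar.compAddMonoidHom φ.toAddMonoidHom

lemma walshChar_apply (φ : Dual (ZMod 2) G) (x : G) : walshChar φ x = signChar (φ x) := rfl

lemma sum_walshChar_mul_sum_walshChar (φ : Dual (ZMod 2) G) {ι κ : Type*} (s : Finset ι)
    (t : Finset κ) (f : ι → G) (g : κ → G) :
    (∑ i ∈ s, walshChar φ (f i)) * ∑ j ∈ t, walshChar φ (g j) =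
      ∑ q ∈ s ×ˢ t, walshChar φ (f q.1 + g q.2) := by
  simp only [sum_mul_sum, sum_product, AddChar.map_add_eq_mul]

noncomputable def charSum (S : Finset G) (φ : Dual (ZMod 2) G) : ℝ := ∑ x ∈ S, walshChar φ x

@[simp] lemma charSum_zero (S : Finset G) : charSum S 0 = #S := by
  simp [charSum, walshChar_apply]

lemma sq_charSum (S : Finset G) (φ : Dual (ZMod 2) G) :
    charSum S φ ^ 2 = ∑ p ∈ S ×ˢ S, walshChar φ (p.1 + p.2) :=
  (sq _).trans (sum_walshChar_mul_sum_walshChar φ S S id id)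

lemma charSum_pow_four_mul_walshChar (S : Finset G) (φ : Dual (ZMod 2) G) (x : G) :
    charSum S φ ^ 4 * walshChar φ x =
      ∑ q ∈ (S ×ˢ S) ×ˢ (S ×ˢ S), walshChar φ (q.1.1 + q.1.2 + (q.2.1 + q.2.2) + x) := by
  rw [show charSum S φ ^ 4 = charSum S φ ^ 2 * charSum S φ ^ 2 by ring, sq_charSum,
    sum_walshChar_mul_sum_walshChar, sum_mul]
  simp only [AddChar.map_add_eq_mul]

lemma exists_card_add_abs_charSum_le (S : Finset G) (φ : Dual (ZMod 2) G) :
    ∃ c : ZMod 2, #S + |charSum S φ| ≤ 2 * #{x ∈ S | φ x = c} := by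
  have hne : ∀ x, φ x ≠ 0 ↔ φ x = 1 := fun x ↦ by generalize φ x = c; decide +revert
  have hcard : (#S : ℝ) = #{x ∈ S | φ x = 0} + #{x ∈ S | φ x = 1} := by
    rw [← card_filter_add_card_filter_not (fun x ↦ φ x = 0)]
    simp only [hne, Nat.cast_add]
  have hχ : ∀ x, walshChar φ x = if φ x = 0 then 1 else -1 := fun x ↦ by
    rw [walshChar_apply]
    split_ifs with h
    · rw [h, AddChar.map_zero_eq_one]
    · rw [(hne x).1 h, signChar_one]
  have hsum : charSum S φ = #{x ∈ S | φ x = 0} - #{x ∈ S | φ x = 1} := by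
    simp only [charSum, hχ, sum_ite, sum_const, hne, nsmul_eq_mul, mul_one, mul_neg]
    ring
  rcases le_total (#{x ∈ S | φ x = 1} : ℝ) #{x ∈ S | φ x = 0} with h | h
  · exact ⟨0, by rw [hsum, abs_of_nonneg (sub_nonneg.2 h)]; linarith⟩
  · exact ⟨1, by rw [hsum, abs_of_nonpos (sub_nonpos.2 h)]; linarith⟩

instance [Finite G] : Finite (Dual (ZMod 2) G) := Module.finite_of_finite (ZMod 2)

noncomputable instance [Finite G] : Fintype (Dual (ZMod 2) G) := Fintype.ofFinite _

variable [Fintype G]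

lemma card_dual : Fintype.card (Dual (ZMod 2) G) = Fintype.card G := by
  rw [card_eq_pow_finrank (K := ZMod 2), card_eq_pow_finrank (K := ZMod 2) (V := G),
    Subspace.dual_finrank_eq]

variable [DecidableEq G]

lemma sum_walshChar_apply (z : G) :
    ∑ φ : Dual (ZMod 2) G, walshChar φ z = if z = 0 then (Fintype.card G : ℝ) else 0 := by
  let ψ : AddChar (Dual (ZMod 2) G) ℝ :=
    signChar.compAddMonoidHom (Dual.eval (ZMod 2) G z).toAddMonoidHom
  have hψ : ψ = 0 ↔ z = 0 := by
    simp [ψ, AddChar.eq_zero_iff, signChar_eq_one_iff, forall_dual_apply_eq_zero_iff]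
  classical
  exact (AddChar.sum_eq_ite ψ).trans (by simp only [hψ, card_dual])

lemma sum_dual_sum_walshChar {ι : Type*} (s : Finset ι) (f : ι → G) :
    ∑ φ : Dual (ZMod 2) G, ∑ i ∈ s, walshChar φ (f i) = Fintype.card G * #{i ∈ s | f i = 0} := by
  rw [sum_comm]
  simp only [sum_walshChar_apply, sum_ite, sum_const, nsmul_eq_mul]
  ring

lemma sum_charSum_sq (S : Finset G) :
    ∑ φ : Dual (ZMod 2) G, charSum S φ ^ 2 = Fintype.card G * #S := by
  simp only [sq_charSum, sum_dual_sum_walshChar, ← diag_card S]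
  congr 3
  ext p
  simp only [mem_filter, mem_product, mem_diag, ZModModule.add_eq_zero_iff_eq]
  grind

lemma sum_erase_zero_charSum_sq (S : Finset G) :
    ∑ φ ∈ univ.erase 0, charSum S φ ^ 2 = Fintype.card G * #S - #S ^ 2 := by
  rw [← sum_charSum_sq S, ← add_sum_erase _ _ (mem_univ 0), charSum_zero]
  ring

lemma sum_charSum_sq_mul_charSum_sq (A B : Finset G) :
    ∑ φ : Dual (ZMod 2) G, charSum A φ ^ 2 * charSum B φ ^ 2 =
      Fintype.card G * addEnergy A B := by
  simp only [sq_charSum, sum_walshChar_mul_sum_walshChar, sum_dual_sum_walshChar, addEnergy]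
  congr 3
  ext q
  simp only [mem_filter, ZModModule.add_add_add_eq_zero_iff]

lemma mem_add_add_add_of_sum_pos {S : Finset G} {x : G}
    (h : 0 < ∑ φ : Dual (ZMod 2) G, charSum S φ ^ 4 * walshChar φ x) : x ∈ S + S + S + S := by
  simp only [charSum_pow_four_mul_walshChar, sum_dual_sum_walshChar] at h
  obtain ⟨q, hq⟩ := card_pos.1 (Nat.cast_pos.1 (pos_of_mul_pos_right h (Nat.cast_nonneg _)))
  simp only [mem_filter, mem_product, ZModModule.add_eq_zero_iff_eq] at hq
  obtain ⟨⟨⟨h₁, h₂⟩, h₃, h₄⟩, rfl⟩ := hq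
  rw [← add_assoc]
  exact add_mem_add (add_mem_add (add_mem_add h₁ h₂) h₃) h₄

theorem add_add_add_eq_univ_of_forall_charSum_sq_le {S : Finset G} (hS : S.Nonempty)
    (h : ∀ φ : Dual (ZMod 2) G, φ ≠ 0 → charSum S φ ^ 2 ≤ #S ^ 3 / Fintype.card G) :
    S + S + S + S = univ := by
  refine eq_univ_of_forall fun x ↦ mem_add_add_add_of_sum_pos ?_
  have hN : (0 : ℝ) < Fintype.card G := by exact_mod_cast Fintype.card_pos
  have hS : (0 : ℝ) < #S := by exact_mod_cast hS.card_pos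
  have hterm : ∀ φ ∈ univ.erase (0 : Dual (ZMod 2) G),
      -(#S ^ 3 / Fintype.card G * charSum S φ ^ 2) ≤ charSum S φ ^ 4 * walshChar φ x := by
    intro φ hφ
    have h1 : -1 ≤ walshChar φ x := neg_one_le_signChar (φ x)
    nlinarith [h φ (ne_of_mem_erase hφ), sq_nonneg (charSum S φ), pow_two_nonneg (charSum S φ ^ 2)]
  calc (0 : ℝ) < #S ^ 5 / Fintype.card G := by positivity
    _ = charSum S 0 ^ 4 * walshChar 0 x +
        ∑ φ ∈ univ.erase 0, -(#S ^ 3 / Fintype.card G * charSum S φ ^ 2) := by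
      rw [sum_neg_distrib, ← mul_sum, sum_erase_zero_charSum_sq, charSum_zero, walshChar_apply,
        LinearMap.zero_apply, AddChar.map_zero_eq_one]
      field_simp
      ring
    _ ≤ charSum S 0 ^ 4 * walshChar 0 x + ∑ φ ∈ univ.erase 0, charSum S φ ^ 4 * walshChar φ x := by
      gcongr with φ hφ
      exact hterm φ hφ
    _ = _ := add_sum_erase univ (fun φ ↦ charSum S φ ^ 4 * walshChar φ x) (mem_univ 0)

theorem one_sub_mul_card_le_of_forall_charSum_sq_le {A B : Finset G} {K η : ℝ}
    (hA : A.Nonempty) (hB : B.Nonempty) (hAB : #(A + B) ≤ K * #B) (hη₀ : 0 ≤ η)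
    (hη : ∀ φ : Dual (ZMod 2) G, φ ≠ 0 → charSum A φ ^ 2 ≤ η * #A ^ 2) :
    (1 - K * η) * Fintype.card G ≤ K * #B := by
  have ha : (0 : ℝ) < #A := by exact_mod_cast hA.card_pos
  have hb : (0 : ℝ) < #B := by exact_mod_cast hB.card_pos
  have hK : 0 ≤ K := (mul_nonneg_iff_of_pos_right hb).1 ((Nat.cast_nonneg _).trans hAB)
  have hfourier : Fintype.card G * (addEnergy A B : ℝ) ≤
      #A ^ 2 * #B ^ 2 + η * #A ^ 2 * (Fintype.card G * #B) := by
    rw [← sum_charSum_sq_mul_charSum_sq, ← add_sum_erase _ _ (mem_univ 0), charSum_zero,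
      charSum_zero]
    gcongr
    calc ∑ φ ∈ univ.erase 0, charSum A φ ^ 2 * charSum B φ ^ 2
        ≤ ∑ φ ∈ univ.erase 0, η * #A ^ 2 * charSum B φ ^ 2 :=
          sum_le_sum fun φ hφ ↦ by gcongr; exact hη φ (ne_of_mem_erase hφ)
      _ = η * #A ^ 2 * (Fintype.card G * #B - #B ^ 2) := by
          rw [← mul_sum, sum_erase_zero_charSum_sq]
      _ ≤ η * #A ^ 2 * (Fintype.card G * #B) := by gcongr; nlinarith
  have hcs : (#A : ℝ) ^ 2 * #B ^ 2 ≤ #(A + B) * addEnergy A B := by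
    exact_mod_cast le_card_add_mul_addEnergy A B
  have : (#A : ℝ) ^ 2 * #B ^ 2 * Fintype.card G ≤
      #A ^ 2 * #B ^ 2 * (K * #B + K * η * Fintype.card G) := by
    calc (#A : ℝ) ^ 2 * #B ^ 2 * Fintype.card G ≤ K * #B * (Fintype.card G * addEnergy A B) := by
          nlinarith [mul_le_mul_of_nonneg_right hAB (Nat.cast_nonneg (addEnergy A B))]
      _ ≤ K * #B * (#A ^ 2 * #B ^ 2 + η * #A ^ 2 * (Fintype.card G * #B)) := by gcongr
      _ = _ := by ring
  nlinarith [le_of_mul_le_mul_left this (by positivity)]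

end Fourier

section Hyperplane

variable {G : Type*} [AddCommGroup G] [Module (ZMod 2) G]

lemma natCard_ker_eq_half [Finite G] {φ : Dual (ZMod 2) G} (hφ : φ ≠ 0) :
    (Nat.card (LinearMap.ker φ) : ℝ) = Nat.card G / 2 := by
  have : Module.Finite (ZMod 2) G := Module.Finite.of_finite
  rw [eq_div_iff two_ne_zero, natCard_eq_pow_finrank (K := ZMod 2),
    natCard_eq_pow_finrank (K := ZMod 2) (V := G), ← Dual.finrank_ker_add_one_of_ne_zero hφ,
    Nat.card_zmod, pow_succ]
  push_cast
  rfl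

lemma exists_vadd_finset_subset_ker [DecidableEq G] {φ : Dual (ZMod 2) G} (hφ : φ ≠ 0)
    {S : Finset G} {c : ZMod 2} (hS : ∀ a ∈ S, φ a = c) :
    ∃ x : G, ((x +ᵥ S : Finset G) : Set G) ⊆ LinearMap.ker φ := by
  obtain ⟨x, hx⟩ := LinearMap.surjective hφ c
  refine ⟨x, ?_⟩
  rw [coe_vadd_finset]
  rintro _ ⟨a, ha, rfl⟩
  simp [hx, hS a ha, ZModModule.add_self]

end Hyperplane

lemma Submodule.coe_map_subtype_subset_add_add_add {R G : Type*} [Ring R] [AddCommGroup G]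
    [Module R G] [DecidableEq G] {W : Submodule R G} [DecidablePred (· ∈ W)] {T : Finset G}
    (hT : (T : Set G) ⊆ W) {V : Submodule R W}
    (hV : (V : Set W) ⊆ ↑(T.subtype (· ∈ W) + T.subtype (· ∈ W) + T.subtype (· ∈ W) +
      T.subtype (· ∈ W))) :
    (V.map W.subtype : Set G) ⊆ ↑(T + T + T + T) := by
  have hT' : (T.subtype (· ∈ W)).image W.subtype = T := by
    ext y
    simpa using fun hy ↦ hT hy
  rintro _ ⟨v, hv, rfl⟩
  have := mem_image_of_mem W.subtype (hV hv)
  rwa [image_add, image_add, image_add, hT'] at this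

lemma exists_nonempty_fiber_card_add_le {G H F : Type*} [AddCommGroup G] [DecidableEq G]
    [AddGroup H] [DecidableEq H] [FunLike F G H] [AddHomClass F G H] (φ : F)
    {A A' B : Finset G} {K : ℝ} {c : H} (hA' : A' ⊆ A) (hc : ∀ a ∈ A', φ a = c)
    (hB : B.Nonempty) (hAB : #(A + B) ≤ K * #B) :
    ∃ c', {b ∈ B | φ b = c'}.Nonempty ∧ #(A' + {b ∈ B | φ b = c'}) ≤ K * #{b ∈ B | φ b = c'} := by
  have hdisj : (B.image φ : Set H).PairwiseDisjoint fun c' ↦ A' + {b ∈ B | φ b = c'} := by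
    intro c₁ _ c₂ _ hne
    rw [Function.onFun, disjoint_left]
    rintro z hz₁ hz₂
    obtain ⟨a₁, ha₁, b₁, hb₁, rfl⟩ := mem_add.1 hz₁
    obtain ⟨a₂, ha₂, b₂, hb₂, he⟩ := mem_add.1 hz₂
    have := congrArg φ he
    simp only [map_add, hc _ ha₁, hc _ ha₂, (mem_filter.1 hb₁).2, (mem_filter.1 hb₂).2] at this
    exact hne (add_left_cancel this).symm
  have hsum : ∑ c' ∈ B.image φ, (#(A' + {b ∈ B | φ b = c'}) : ℝ) ≤
      ∑ c' ∈ B.image φ, K * #{b ∈ B | φ b = c'} := by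
    rw [← mul_sum, ← Nat.cast_sum, ← Nat.cast_sum, ← card_eq_sum_card_image, ← card_biUnion hdisj]
    refine le_trans ?_ hAB
    gcongr
    exact biUnion_subset.2 fun _ _ ↦ add_subset_add hA' (filter_subset _ _)
  obtain ⟨c', hc', hle⟩ := exists_le_of_sum_le (hB.image φ) hsum
  obtain ⟨b, hb, rfl⟩ := mem_image.1 hc'
  exact ⟨φ b, ⟨b, mem_filter.2 ⟨hb, rfl⟩⟩, hle⟩

lemma one_add_four_div_sqrt_le {δ δ' : ℝ} (hδ : 0 < δ) (hδ1 : δ ≤ 1) (h : δ * (1 + √δ) ≤ δ') :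
    1 + 4 / √δ' ≤ 4 / √δ := by
  set s := √δ with hs
  have hs0 : 0 < s := Real.sqrt_pos.2 hδ
  have hs1 : s ≤ 1 := Real.sqrt_le_one.2 hδ1
  set r := √(1 + s) with hr
  have hr2 : r ^ 2 = 1 + s := Real.sq_sqrt (by positivity)
  have hr1 : 1 ≤ r := Real.le_sqrt_of_sq_le (by linarith)
  have hδ' : s * r ≤ √δ' := by
    rw [hr, hs, ← Real.sqrt_mul hδ.le]
    exact Real.sqrt_le_sqrt h
  -- `(4 - s)² (1 + s) ≥ 16` on `[0, 1]`
  have key : 4 ≤ r * (4 - s) := by nlinarith [mul_pos hs0 hs0]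
  calc 1 + 4 / √δ' ≤ 1 + 4 / (s * r) := by gcongr
    _ ≤ 4 / s := by
      have : 4 / s - (1 + 4 / (s * r)) = (r * (4 - s) - 4) / (s * r) := by field_simp; ring
      linarith [div_nonneg (sub_nonneg.2 key) (by positivity : 0 ≤ s * r)]

section Bogolyubov

variable {G : Type*} [AddCommGroup G] [Module (ZMod 2) G] [Fintype G] [DecidableEq G]

theorem exists_vadd_finset_subset_ker_density_increment {B : Finset G} {φ : Dual (ZMod 2) G}
    (hφ : φ ≠ 0) (hlarge : #B ^ 3 / Fintype.card G ≤ charSum B φ ^ 2) :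
    ∃ T : Finset G, T + T + T + T ⊆ B + B + B + B ∧ (T : Set G) ⊆ LinearMap.ker φ ∧
      #B / Fintype.card G * (1 + √(#B / Fintype.card G)) ≤ #T / (Fintype.card G / 2) := by
  obtain ⟨c, hc⟩ := exists_card_add_abs_charSum_le B φ
  obtain ⟨x, hx⟩ := exists_vadd_finset_subset_ker hφ (S := {a ∈ B | φ a = c})
    fun a ha ↦ (mem_filter.1 ha).2
  refine ⟨_, ?_, hx, ?_⟩
  · rw [ZModModule.add_add_add_vadd_finset]
    gcongr <;> exact filter_subset _ _
  have hN : (0 : ℝ) < Fintype.card G := by exact_mod_cast Fintype.card_pos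
  have hsqrt : #B * √(#B / Fintype.card G) ≤ |charSum B φ| := by
    rw [← Real.sqrt_sq_eq_abs, show (#B : ℝ) * √(#B / Fintype.card G) = √(#B ^ 3 / Fintype.card G)
      by rw [show (#B : ℝ) ^ 3 / Fintype.card G = #B ^ 2 * (#B / Fintype.card G) by ring,
        Real.sqrt_mul (sq_nonneg _), Real.sqrt_sq (Nat.cast_nonneg _)]]
    exact Real.sqrt_le_sqrt hlarge
  rw [card_vadd_finset, div_div_eq_mul_div, div_mul_eq_mul_div, mul_comm _ (2 : ℝ)]
  exact div_le_div_of_nonneg_right (by linarith) hN.le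

theorem exists_submodule_subset_add_add_add {B : Finset G} (hB : B.Nonempty) :
    ∃ V : Submodule (ZMod 2) G, (V : Set G) ⊆ ↑(B + B + B + B) ∧
      (finrank (ZMod 2) G : ℝ) - finrank (ZMod 2) V ≤ 4 / √(#B / Fintype.card G) := by
  induction hd : finrank (ZMod 2) G using Nat.strong_induction_on generalizing G with
  | _ d ih =>
  by_cases huni : ∀ φ : Dual (ZMod 2) G, φ ≠ 0 → charSum B φ ^ 2 ≤ #B ^ 3 / Fintype.card G
  · refine ⟨⊤, by simp [add_add_add_eq_univ_of_forall_charSum_sq_le hB huni], ?_⟩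
    rw [finrank_top, hd, sub_self]
    positivity
  push Not at huni
  obtain ⟨φ, hφ, hlarge⟩ := huni
  obtain ⟨T, hTB, hTW, hδ⟩ := exists_vadd_finset_subset_ker_density_increment hφ hlarge.le
  classical
  set W := LinearMap.ker φ
  have hrank : finrank (ZMod 2) W + 1 = d := hd ▸ Dual.finrank_ker_add_one_of_ne_zero hφ
  have hN : (0 : ℝ) < Fintype.card G := by exact_mod_cast Fintype.card_pos
  have hδ₀ : (0 : ℝ) < #B / Fintype.card G := by have := hB.card_pos; positivity
  have hT : #(T.subtype (· ∈ W)) = #T := by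
    rw [card_subtype, filter_true_of_mem fun y hy ↦ SetLike.mem_coe.1 (hTW (mem_coe.2 hy))]
  have hW : (Fintype.card W : ℝ) = Fintype.card G / 2 := by
    simpa only [Nat.card_eq_fintype_card] using natCard_ker_eq_half hφ
  rw [← hT, ← hW] at hδ
  have hTne : (T.subtype (· ∈ W)).Nonempty := by
    have := (mul_pos hδ₀ (by positivity)).trans_le hδ
    exact card_pos.1 (by exact_mod_cast (div_pos_iff_of_pos_right (by positivity)).1 this)
  obtain ⟨V, hV, hcodim⟩ := ih _ (by omega) hTne rfl
  refine ⟨V.map W.subtype, (Submodule.coe_map_subtype_subset_add_add_add hTW hV).trans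
    (coe_subset.2 hTB), ?_⟩
  have := one_add_four_div_sqrt_le hδ₀ ((div_le_one hN).2 (by exact_mod_cast card_le_univ B)) hδ
  rw [Submodule.finrank_map_subtype_eq, ← hrank]
  push_cast
  linarith

end Bogolyubov

theorem exists_hyperplane_density_increment {G : Type*} [AddCommGroup G] [Module (ZMod 2) G]
    [Fintype G] [DecidableEq G] {A B : Finset G} {K ε : ℝ} (hB : B.Nonempty)
    (hAB : #(A + B) ≤ K * #B) {φ : Dual (ZMod 2) G} (hφ : φ ≠ 0) (hε : ε * #A ≤ |charSum A φ|) :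
    ∃ (W : Submodule (ZMod 2) G) (x y : G) (A' B' : Finset G),
      finrank (ZMod 2) W + 1 = finrank (ZMod 2) G ∧ (A' : Set G) ⊆ W ∧ (B' : Set G) ⊆ W ∧
      A'.image (x + ·) ⊆ A ∧ B'.image (y + ·) ⊆ B ∧
      #A / Fintype.card G * (1 + ε) ≤ #A' / Nat.card W ∧ #(A' + B') ≤ K * #B' := by
  obtain ⟨c, hc⟩ := exists_card_add_abs_charSum_le A φ
  obtain ⟨c', -, hc'⟩ := exists_nonempty_fiber_card_add_le φ (c := c) (filter_subset _ A)
    (fun a ha ↦ (mem_filter.1 ha).2) hB hAB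
  obtain ⟨x, hx⟩ := exists_vadd_finset_subset_ker hφ (S := {a ∈ A | φ a = c})
    fun a ha ↦ (mem_filter.1 ha).2
  obtain ⟨y, hy⟩ := exists_vadd_finset_subset_ker hφ (S := {b ∈ B | φ b = c'})
    fun b hb ↦ (mem_filter.1 hb).2
  refine ⟨LinearMap.ker φ, x, y, _, _, Dual.finrank_ker_add_one_of_ne_zero hφ, hx, hy, ?_, ?_, ?_,
    ?_⟩
  · exact (ZModModule.vadd_vadd_finset_self x _).trans_subset (filter_subset _ _)
  · exact (ZModModule.vadd_vadd_finset_self y _).trans_subset (filter_subset _ _)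
  · have hN : (0 : ℝ) < Fintype.card G := by exact_mod_cast Fintype.card_pos
    rw [card_vadd_finset, natCard_ker_eq_half hφ, Nat.card_eq_fintype_card, div_div_eq_mul_div,
      div_mul_eq_mul_div]
    exact div_le_div_of_nonneg_right (by linarith) hN.le
  · rwa [vadd_add_vadd_comm, card_vadd_finset, card_vadd_finset]

theorem exists_submodule_subset_add_add_add_of_forall_charSum_sq_le {G : Type*} [AddCommGroup G]
    [Module (ZMod 2) G] [Fintype G] [DecidableEq G] {A B : Finset G} {K : ℝ} (hK : 0 < K)
    (hA : A.Nonempty) (hB : B.Nonempty) (hAB : #(A + B) ≤ K * #B)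
    (h : ∀ φ : Dual (ZMod 2) G, φ ≠ 0 → charSum A φ ^ 2 ≤ 1 / (8 * K) * #A ^ 2) :
    ∃ V : Submodule (ZMod 2) G, (V : Set G) ⊆ ↑(B + B + B + B) ∧
      (finrank (ZMod 2) G : ℝ) - finrank (ZMod 2) V ≤ 5 * √K := by
  obtain ⟨V, hV, hcodim⟩ := exists_submodule_subset_add_add_add hB
  refine ⟨V, hV, hcodim.trans ?_⟩
  have hN : (0 : ℝ) < Fintype.card G := by exact_mod_cast Fintype.card_pos
  have hdens : 7 / (8 * K) ≤ #B / Fintype.card G := by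
    have := one_sub_mul_card_le_of_forall_charSum_sq_le hA hB hAB (by positivity) h
    rw [div_le_div_iff₀ (by positivity) hN]
    field_simp at this
    linarith
  have h78 : 4 ≤ 5 * √(7 / 8) := by
    rw [← div_le_iff₀' (by norm_num)]
    exact Real.le_sqrt_of_sq_le (by norm_num)
  calc 4 / √(#B / Fintype.card G) ≤ 4 / √(7 / (8 * K)) := by gcongr
    _ ≤ 5 * √K := by
      rwa [div_le_iff₀ (by positivity), mul_assoc, ← Real.sqrt_mul hK.le,
        show K * (7 / (8 * K)) = 7 / 8 by field_simp]

/-- Iteration lemma with doubling: if `|A+B| ≤ K|B|` then either `B+B+B+B` contains a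
subspace of codimension `O(K^{1/2})`, or `A` has a density increment of quality
`2^{-3/2}K^{-1/2}` on a codimension-1 subspace, compatibly with `B`. -/
theorem iteration_lemma_doubling :
    ∃ C : ℝ, 0 < C ∧
      ∀ (n : ℕ) (A B : Finset (Fin n → ZMod 2)) (K : ℝ), A.Nonempty → B.Nonempty →
        1 ≤ K → ((A + B).card : ℝ) ≤ K * B.card →
        (∃ V : Submodule (ZMod 2) (Fin n → ZMod 2),
            (V : Set (Fin n → ZMod 2)) ⊆ (↑(B + B + B + B) : Set (Fin n → ZMod 2)) ∧
            ((n : ℝ) - Module.finrank (ZMod 2) V) ≤ C * K ^ ((1 : ℝ) / 2)) ∨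
        (∃ (W : Submodule (ZMod 2) (Fin n → ZMod 2)) (x y : Fin n → ZMod 2)
            (A' B' : Finset (Fin n → ZMod 2)),
            Module.finrank (ZMod 2) W + 1 = n ∧
            (A' : Set (Fin n → ZMod 2)) ⊆ (W : Set (Fin n → ZMod 2)) ∧
            (B' : Set (Fin n → ZMod 2)) ⊆ (W : Set (Fin n → ZMod 2)) ∧
            A'.image (x + ·) ⊆ A ∧ B'.image (y + ·) ⊆ B ∧
            ((A.card : ℝ) / 2 ^ n) * (1 + 2 ^ (-(3 : ℝ) / 2) * K ^ (-(1 : ℝ) / 2)) ≤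
              (A'.card : ℝ) / Nat.card W ∧
            ((A' + B').card : ℝ) ≤ K * B'.card) := by
  refine ⟨5, by norm_num, fun n A B K hA hB hK hAB ↦ ?_⟩
  have hK₀ : 0 < K := by linarith
  have hrank : finrank (ZMod 2) (Fin n → ZMod 2) = n := finrank_fin_fun (ZMod 2)
  have hcard : (Fintype.card (Fin n → ZMod 2) : ℝ) = 2 ^ n := by simp
  set ε := (2 : ℝ) ^ (-(3 : ℝ) / 2) * K ^ (-(1 : ℝ) / 2)
  by_cases hinc : ∃ φ : Dual (ZMod 2) (Fin n → ZMod 2), φ ≠ 0 ∧ ε * #A ≤ |charSum A φ|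
  · obtain ⟨φ, hφ, hlarge⟩ := hinc
    obtain ⟨W, x, y, A', B', hW, h⟩ := exists_hyperplane_density_increment hB hAB hφ hlarge
    exact Or.inr ⟨W, x, y, A', B', hW.trans hrank, hcard ▸ h⟩
  push Not at hinc
  have hε : ε ^ 2 = 1 / (8 * K) := by
    rw [mul_pow, ← Real.rpow_natCast, ← Real.rpow_natCast (K ^ _), ← Real.rpow_mul (by norm_num),
      ← Real.rpow_mul hK₀.le]
    norm_num [Real.rpow_neg_one, mul_comm]
  obtain ⟨V, hV, hcodim⟩ := exists_submodule_subset_add_add_add_of_forall_charSum_sq_le hK₀ hA hB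
    hAB fun φ hφ ↦ by
      rw [← hε, ← mul_pow, ← sq_abs]
      exact pow_le_pow_left₀ (abs_nonneg _) (hinc φ hφ).le 2
  exact Or.inl ⟨V, hV, by rwa [hrank, Real.sqrt_eq_rpow] at hcodim⟩
end

section
/- Let G = 𝔽₂ⁿ and let A ⊆ G be nonempty with |A+A| ≤ K|A| and density α = |A|/2ⁿ. Then A+A+A+A contains a subspace of G of codimension at most C·K·log(1/α) + C for some absolute constant C. -/
/-
Write `S(γ) = ∑_{a ∈ A} (-1)^{γ ⬝ᵥ a}` for the Walsh coefficients of `A`. Fourier inversion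
counts the representations `x = a + b + c + d` as `2⁻ⁿ ∑_γ S(γ)⁴ (-1)^{γ ⬝ᵥ x}`. If `x` is
orthogonal to the large spectrum `Δ = {γ | S(γ)² ≥ θ}`, `θ = |A|²/4K`, then the remaining terms
change this count by at most `2θ|A|` (Parseval), which is less than the additive energy
`E(A) ≥ |A|³/K`; so `Δ^⊥ ⊆ 4A`, and its codimension is the size of a basis of `span Δ` taken
inside `Δ`. Chang's lemma bounds that size: the characters of a linearly independent family
`γ_k` are independent random signs, so `∑_x exp (∑ c_k (-1)^{γ_k ⬝ᵥ x}) ≤ 2ⁿ exp (∑ c_k²/2)`,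
and Jensen's inequality over `A` with `c_k = S(γ_k)/|A|` gives
`∑ S(γ_k)² ≤ 2|A|² log (2ⁿ/|A|)`, hence at most `8K log (1/α)` such `γ_k`.
-/

open Finset Pointwise

lemma AddMonoidHom.card_nsmul_sum_comp_of_surjective {G W M : Type*} [AddGroup G] [Fintype G]
    [AddGroup W] [Fintype W] [DecidableEq W] [AddCommMonoid M] (f : G →+ W)
    (hf : Function.Surjective f) (F : W → M) :
    Fintype.card W • ∑ x, F (f x) = Fintype.card G • ∑ w, F w := by
  have hfiber (w : W) : #{x | f x = w} = #{x | f x = 0} :=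
    AddMonoidHom.card_fiber_eq_of_mem_range f (hf w) (hf 0)
  have hcard : Fintype.card G = Fintype.card W * #{x | f x = 0} := by
    rw [← card_univ, card_eq_sum_card_fiberwise (f := f) fun _ _ ↦ mem_univ _]
    simp only [hfiber, sum_const, card_univ, smul_eq_mul]
  rw [← sum_fiberwise' univ f F, hcard]
  simp only [sum_const, hfiber, ← smul_sum, smul_smul]

lemma Matrix.mulVec_surjective_of_linearIndependent {K m n : Type*} [Field K] [Fintype m]
    [Fintype n] {M : Matrix m n K} (h : LinearIndependent K M.row) :
    Function.Surjective M.mulVec := by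
  have : LinearMap.range M.mulVecLin = ⊤ := Submodule.eq_top_of_finrank_eq <| by
    rw [← Matrix.rank, h.rank_matrix, Module.finrank_fintype_fun_eq_card]
  exact LinearMap.range_eq_top.mp this

lemma Matrix.card_le_card_add_finrank_ker {K m n : Type*} [Field K] [Fintype m] [Fintype n]
    (M : Matrix m n K) :
    Fintype.card n ≤ Fintype.card m + Module.finrank K (LinearMap.ker M.mulVecLin) := by
  have := LinearMap.finrank_range_add_finrank_ker M.mulVecLin
  rw [Module.finrank_fintype_fun_eq_card] at this
  have := M.rank_le_card_height
  rw [Matrix.rank] at this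
  omega

lemma dotProduct_eq_zero_of_mem_span {R ι : Type*} [CommRing R] [Fintype ι] {s : Set (ι → R)}
    {γ x : ι → R} (hγ : γ ∈ Submodule.span R s) (hx : ∀ v ∈ s, v ⬝ᵥ x = 0) : γ ⬝ᵥ x = 0 := by
  induction hγ using Submodule.span_induction with
  | mem v hv => exact hx v hv
  | zero => exact zero_dotProduct x
  | add u v _ _ hu hv => rw [add_dotProduct, hu, hv, add_zero]
  | smul c v _ hv => rw [smul_dotProduct, hv, smul_zero]

lemma Real.exp_sum_div_card_le {α : Type*} {s : Finset α} (hs : s.Nonempty) (f : α → ℝ) :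
    Real.exp ((∑ i ∈ s, f i) / #s) ≤ (∑ i ∈ s, Real.exp (f i)) / #s := by
  have hs' : (#s : ℝ) ≠ 0 := by simp [hs.ne_empty]
  have := convexOn_exp.map_sum_le (t := s) (w := fun _ ↦ (#s : ℝ)⁻¹) (p := f)
    (fun _ _ ↦ by positivity) (by simp [hs']) (by simp)
  simpa only [smul_eq_mul, ← mul_sum, inv_mul_eq_div, sum_div] using this

def sign₂ (e : ZMod 2) : ℝ := if e = 0 then 1 else -1

lemma sign₂_add (a b : ZMod 2) : sign₂ (a + b) = sign₂ a * sign₂ b := by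
  have h01 : ∀ e : ZMod 2, e = 0 ∨ e = 1 := by decide
  rcases h01 a with rfl | rfl <;> rcases h01 b with rfl | rfl <;>
    simp [sign₂, show (1 : ZMod 2) + 1 = 0 from rfl]

lemma sign₂_zero : sign₂ 0 = 1 := if_pos rfl

lemma sum_comp_sign₂ (g : ℝ → ℝ) : ∑ e, g (sign₂ e) = g 1 + g (-1) :=
  Fin.sum_univ_two fun e : ZMod 2 ↦ g (sign₂ e)

lemma card_pow_three_le_mul_addEnergy {α : Type*} [DecidableEq α] [Add α] {A : Finset α}
    (hA : A.Nonempty) {K : ℝ} (hAA : (#(A + A) : ℝ) ≤ K * #A) :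
    (#A : ℝ) ^ 3 ≤ K * addEnergy A A := by
  have hA' : (0 : ℝ) < #A := by exact_mod_cast hA.card_pos
  have h := le_card_add_mul_addEnergy A A
  have hcast : ((#A : ℝ) ^ 2 * #A ^ 2) ≤ #(A + A) * addEnergy A A := by exact_mod_cast h
  have := hcast.trans (mul_le_mul_of_nonneg_right hAA (Nat.cast_nonneg _))
  nlinarith

section Walsh

variable {ι : Type*} [Fintype ι]

noncomputable def walsh (γ x : ι → ZMod 2) : ℝ := sign₂ (γ ⬝ᵥ x)

lemma walsh_add_right (γ x y : ι → ZMod 2) : walsh γ (x + y) = walsh γ x * walsh γ y := by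
  simp only [walsh, dotProduct_add, sign₂_add]

lemma walsh_add_left (γ δ x : ι → ZMod 2) : walsh (γ + δ) x = walsh γ x * walsh δ x := by
  simp only [walsh, add_dotProduct, sign₂_add]

lemma walsh_zero_right (γ : ι → ZMod 2) : walsh γ 0 = 1 := by
  simp [walsh, sign₂_zero]

lemma sum_walsh_left [DecidableEq ι] (x : ι → ZMod 2) :
    ∑ γ, walsh γ x = if x = 0 then (Fintype.card (ι → ZMod 2) : ℝ) else 0 := by
  split_ifs with hx
  · simp [hx, walsh_zero_right]
  obtain ⟨i, hi⟩ : ∃ i, x i ≠ 0 := Function.ne_iff.mp hx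
  have hflip : walsh (Pi.single i 1) x = -1 := by
    simp [walsh, sign₂, single_dotProduct, hi]
  have := Equiv.sum_comp (Equiv.addRight (Pi.single i 1)) (walsh · x)
  simp only [Equiv.coe_addRight, walsh_add_left, hflip, mul_neg_one, sum_neg_distrib] at this
  linarith

lemma sq_sum_walsh {α : Type*} (s : Finset α) (v : α → ι → ZMod 2) (γ : ι → ZMod 2) :
    (∑ i ∈ s, walsh γ (v i)) ^ 2 = ∑ p ∈ s ×ˢ s, walsh γ (v p.1 + v p.2) := by
  simp only [sq, sum_mul_sum, sum_product, walsh_add_right]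

lemma sum_sum_walsh_mul_walsh [DecidableEq ι] {α : Type*} (s : Finset α) (v : α → ι → ZMod 2)
    (x : ι → ZMod 2) :
    ∑ γ, (∑ i ∈ s, walsh γ (v i)) * walsh γ x =
      Fintype.card (ι → ZMod 2) * #{i ∈ s | v i = x} := by
  simp_rw [sum_mul, ← walsh_add_right]
  rw [sum_comm]
  simp_rw [sum_walsh_left, add_eq_zero_iff_eq_neg, ZModModule.neg_eq_self]
  simp [sum_ite, mul_comm]

noncomputable def walshCoeff (A : Finset (ι → ZMod 2)) (γ : ι → ZMod 2) : ℝ := ∑ a ∈ A, walsh γ a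

variable (A : Finset (ι → ZMod 2))

lemma walshCoeff_sq (γ : ι → ZMod 2) :
    walshCoeff A γ ^ 2 = ∑ p ∈ A ×ˢ A, walsh γ (p.1 + p.2) :=
  sq_sum_walsh A id γ

lemma walshCoeff_pow_four (γ : ι → ZMod 2) :
    walshCoeff A γ ^ 4 =
      ∑ q ∈ (A ×ˢ A) ×ˢ (A ×ˢ A), walsh γ (q.1.1 + q.1.2 + (q.2.1 + q.2.2)) := by
  rw [show walshCoeff A γ ^ 4 = (walshCoeff A γ ^ 2) ^ 2 by ring, walshCoeff_sq, sq_sum_walsh]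

lemma neg_one_le_walsh (γ x : ι → ZMod 2) : -1 ≤ walsh γ x := by
  unfold walsh sign₂; split_ifs <;> norm_num

lemma walshCoeff_pow_four_sub_le {θ : ℝ} (hθ : 0 ≤ θ) {γ x : ι → ZMod 2}
    (hx : θ ≤ walshCoeff A γ ^ 2 → γ ⬝ᵥ x = 0) :
    walshCoeff A γ ^ 4 - 2 * θ * walshCoeff A γ ^ 2 ≤ walshCoeff A γ ^ 4 * walsh γ x := by
  by_cases hlarge : θ ≤ walshCoeff A γ ^ 2
  · rw [walsh, hx hlarge, sign₂_zero]
    nlinarith [sq_nonneg (walshCoeff A γ)]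
  · nlinarith [neg_one_le_walsh γ x, sq_nonneg (walshCoeff A γ),
      pow_two_nonneg (walshCoeff A γ ^ 2)]

variable [DecidableEq ι]

lemma sum_walshCoeff_sq : ∑ γ, walshCoeff A γ ^ 2 = Fintype.card (ι → ZMod 2) * #A := by
  have := sum_sum_walsh_mul_walsh (A ×ˢ A) (fun p ↦ p.1 + p.2) 0
  simp only [walsh_zero_right, mul_one, add_eq_zero_iff_eq_neg, ZModModule.neg_eq_self] at this
  rw [← diag_eq_filter, diag_card] at this
  simpa only [walshCoeff_sq] using this

lemma sum_walshCoeff_pow_four_mul_walsh (x : ι → ZMod 2) :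
    ∑ γ, walshCoeff A γ ^ 4 * walsh γ x = Fintype.card (ι → ZMod 2) *
      #{q ∈ (A ×ˢ A) ×ˢ (A ×ˢ A) | q.1.1 + q.1.2 + (q.2.1 + q.2.2) = x} := by
  simp only [walshCoeff_pow_four]
  rw [sum_sum_walsh_mul_walsh]

lemma sum_walshCoeff_pow_four :
    ∑ γ, walshCoeff A γ ^ 4 = Fintype.card (ι → ZMod 2) * addEnergy A A := by
  have := sum_walshCoeff_pow_four_mul_walsh A 0
  simp only [walsh_zero_right, mul_one, add_eq_zero_iff_eq_neg, ZModModule.neg_eq_self] at this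
  rw [this, addEnergy_eq_card_filter]

lemma mem_add_add_add_of_forall_dotProduct_eq_zero {θ : ℝ} (hθ : 0 ≤ θ)
    (hE : 2 * θ * #A < addEnergy A A) {x : ι → ZMod 2}
    (hx : ∀ γ, θ ≤ walshCoeff A γ ^ 2 → γ ⬝ᵥ x = 0) : x ∈ A + A + A + A := by
  set N : ℝ := (Fintype.card (ι → ZMod 2) : ℝ)
  have hcount : N * (addEnergy A A - 2 * θ * #A) ≤
      N * #{q ∈ (A ×ˢ A) ×ˢ (A ×ˢ A) | q.1.1 + q.1.2 + (q.2.1 + q.2.2) = x} :=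
    calc N * (addEnergy A A - 2 * θ * #A)
        = ∑ γ, (walshCoeff A γ ^ 4 - 2 * θ * walshCoeff A γ ^ 2) := by
          rw [sum_sub_distrib, ← mul_sum, sum_walshCoeff_pow_four, sum_walshCoeff_sq]; ring
      _ ≤ ∑ γ, walshCoeff A γ ^ 4 * walsh γ x :=
          sum_le_sum fun γ _ ↦ walshCoeff_pow_four_sub_le A hθ (hx γ)
      _ = _ := sum_walshCoeff_pow_four_mul_walsh A x
  have hpos : 0 < #{q ∈ (A ×ˢ A) ×ˢ (A ×ˢ A) | q.1.1 + q.1.2 + (q.2.1 + q.2.2) = x} := by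
    have := le_of_mul_le_mul_left hcount (by positivity)
    exact_mod_cast (sub_pos.mpr hE).trans_le this
  obtain ⟨⟨⟨a, b⟩, c, d⟩, hq⟩ := card_pos.mp hpos
  simp only [mem_filter, mem_product] at hq
  rw [← hq.2, ← add_assoc]
  exact add_mem_add (add_mem_add (add_mem_add hq.1.1.1 hq.1.1.2) hq.1.2.1) hq.1.2.2

lemma sum_prod_walsh {κ : Type*} [Fintype κ] [DecidableEq κ] (γ : κ → ι → ZMod 2)
    (hγ : LinearIndependent (ZMod 2) γ) (g : κ → ℝ → ℝ) :
    2 ^ Fintype.card κ * ∑ x, ∏ k, g k (walsh (γ k) x) =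
      Fintype.card (ι → ZMod 2) * ∏ k, (g k 1 + g k (-1)) := by
  -- `x ↦ (γ k ⬝ᵥ x)ₖ` is a surjective linear map, so it takes every sign pattern equally often.
  have := (Matrix.of γ).mulVecLin.toAddMonoidHom.card_nsmul_sum_comp_of_surjective
    (Matrix.mulVec_surjective_of_linearIndependent hγ) fun w ↦ ∏ k, g k (sign₂ (w k))
  rw [← Fintype.prod_sum fun k e ↦ g k (sign₂ e)] at this
  simp only [nsmul_eq_mul, sum_comp_sign₂, Fintype.card_fun, ZMod.card, Nat.cast_pow,
    Nat.cast_ofNat] at this ⊢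
  exact this

lemma sum_exp_sum_mul_walsh_le {κ : Type*} [Fintype κ] [DecidableEq κ] (γ : κ → ι → ZMod 2)
    (hγ : LinearIndependent (ZMod 2) γ) (c : κ → ℝ) :
    ∑ x, Real.exp (∑ k, c k * walsh (γ k) x) ≤
      Fintype.card (ι → ZMod 2) * Real.exp (∑ k, c k ^ 2 / 2) := by
  have hprod := sum_prod_walsh γ hγ fun k s ↦ Real.exp (c k * s)
  refine le_of_mul_le_mul_left ?_ (by positivity : (0 : ℝ) < 2 ^ Fintype.card κ)
  calc 2 ^ Fintype.card κ * ∑ x, Real.exp (∑ k, c k * walsh (γ k) x)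
      = 2 ^ Fintype.card κ * (Fintype.card (ι → ZMod 2) * ∏ k, Real.cosh (c k)) := by
        simp only [Real.exp_sum, hprod, Real.cosh_eq, mul_one, mul_neg_one, prod_div_distrib,
          prod_const, card_univ]
        field_simp
    _ ≤ 2 ^ Fintype.card κ * (Fintype.card (ι → ZMod 2) * ∏ k, Real.exp (c k ^ 2 / 2)) := by
        gcongr with k
        exact Real.cosh_le_exp_half_sq _
    _ = 2 ^ Fintype.card κ * (Fintype.card (ι → ZMod 2) * Real.exp (∑ k, c k ^ 2 / 2)) := by
        rw [Real.exp_sum]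

lemma sum_walshCoeff_sq_le {κ : Type*} [Fintype κ] [DecidableEq κ] (hA : A.Nonempty)
    (γ : κ → ι → ZMod 2) (hγ : LinearIndependent (ZMod 2) γ) :
    ∑ k, walshCoeff A (γ k) ^ 2 ≤ 2 * #A ^ 2 * Real.log (Fintype.card (ι → ZMod 2) / #A) := by
  set a : ℝ := (#A : ℝ)
  set N : ℝ := (Fintype.card (ι → ZMod 2) : ℝ)
  set σ := ∑ k, walshCoeff A (γ k) ^ 2
  have ha : 0 < a := by simpa [a] using hA.card_pos
  set f : (ι → ZMod 2) → ℝ := fun x ↦ ∑ k, walshCoeff A (γ k) / a * walsh (γ k) x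
  have hmean : (∑ x ∈ A, f x) / a = σ / a ^ 2 := by
    simp only [f, σ, sum_comm (s := A), ← mul_sum, walshCoeff]
    rw [sum_div, sum_div]
    refine sum_congr rfl fun k _ ↦ ?_
    ring
  have hexp : Real.exp (σ / a ^ 2) ≤ N / a * Real.exp (σ / (2 * a ^ 2)) :=
    calc Real.exp (σ / a ^ 2) ≤ (∑ x ∈ A, Real.exp (f x)) / a := by
          rw [← hmean]; exact Real.exp_sum_div_card_le hA f
      _ ≤ (∑ x, Real.exp (f x)) / a := by
          exact div_le_div_of_nonneg_right
            (sum_le_univ_sum_of_nonneg fun _ ↦ (Real.exp_pos _).le) ha.le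
      _ ≤ N * Real.exp (∑ k, (walshCoeff A (γ k) / a) ^ 2 / 2) / a := by
          gcongr; exact sum_exp_sum_mul_walsh_le γ hγ _
      _ = N / a * Real.exp (σ / (2 * a ^ 2)) := by
          rw [mul_div_right_comm]
          congr 2
          simp only [div_pow, ← sum_div, σ]
          ring
  have hhalf : σ / (2 * a ^ 2) ≤ Real.log (N / a) := by
    rw [Real.le_log_iff_exp_le (by positivity)]
    have : Real.exp (σ / a ^ 2) = Real.exp (σ / (2 * a ^ 2)) * Real.exp (σ / (2 * a ^ 2)) := by
      rw [← Real.exp_add]; ring_nf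
    rw [this] at hexp
    exact le_of_mul_le_mul_right hexp (Real.exp_pos _)
  rw [div_le_iff₀ (by positivity)] at hhalf
  linarith

lemma card_mul_le_of_linearIndependent {κ : Type*} [Fintype κ] [DecidableEq κ]
    (hA : A.Nonempty) (γ : κ → ι → ZMod 2) (hγ : LinearIndependent (ZMod 2) γ) {θ : ℝ}
    (hθ : ∀ k, θ ≤ walshCoeff A (γ k) ^ 2) :
    Fintype.card κ * θ ≤ 2 * #A ^ 2 * Real.log (Fintype.card (ι → ZMod 2) / #A) :=
  calc Fintype.card κ * θ = ∑ _k : κ, θ := by simp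
    _ ≤ _ := (sum_le_sum fun k _ ↦ hθ k).trans (sum_walshCoeff_sq_le A hA γ hγ)

theorem exists_submodule_subset_add_add_add_card_le {A : Finset (ι → ZMod 2)} (hA : A.Nonempty)
    {K : ℝ} (hAA : (#(A + A) : ℝ) ≤ K * #A) :
    ∃ V : Submodule (ZMod 2) (ι → ZMod 2), (V : Set (ι → ZMod 2)) ⊆ ↑(A + A + A + A) ∧
      (Fintype.card ι : ℝ) ≤
        8 * K * Real.log (Fintype.card (ι → ZMod 2) / #A) + Module.finrank (ZMod 2) V := by
  classical
  have hA' : (0 : ℝ) < #A := by exact_mod_cast hA.card_pos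
  have hAA' : (0 : ℝ) < #(A + A) := by exact_mod_cast (hA.add hA).card_pos
  have hK : 0 < K := pos_of_mul_pos_left (hAA'.trans_le hAA) hA'.le
  set θ : ℝ := #A ^ 2 / (4 * K)
  have hθ : 0 < θ := by positivity
  obtain ⟨b, hbθ, hspan, hb⟩ :=
    exists_linearIndependent (ZMod 2) {γ : ι → ZMod 2 | θ ≤ walshCoeff A γ ^ 2}
  set M : Matrix b ι (ZMod 2) := Matrix.of (↑)
  refine ⟨LinearMap.ker M.mulVecLin, fun x hx ↦ ?_, ?_⟩
  · have hE : 2 * θ * #A < addEnergy A A := by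
      have hE0 : (0 : ℝ) < addEnergy A A := by exact_mod_cast addEnergy_pos hA hA
      calc 2 * θ * #A = (#A : ℝ) ^ 3 / K / 2 := by simp only [θ]; field_simp; ring
        _ ≤ addEnergy A A / 2 := by
          gcongr; exact (div_le_iff₀' hK).mpr (card_pow_three_le_mul_addEnergy hA hAA)
        _ < addEnergy A A := half_lt_self hE0
    refine mem_add_add_add_of_forall_dotProduct_eq_zero A hθ.le hE fun γ hγ ↦ ?_
    have hγb : γ ∈ Submodule.span (ZMod 2) b := by rw [hspan]; exact Submodule.subset_span hγ
    exact dotProduct_eq_zero_of_mem_span hγb fun v hv ↦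
      congr_fun (LinearMap.mem_ker.mp hx) ⟨v, hv⟩
  · have hcard := card_mul_le_of_linearIndependent A hA ((↑) : b → _) hb fun k ↦ hbθ k.2
    have hb8 : (Fintype.card b : ℝ) ≤ 8 * K * Real.log (Fintype.card (ι → ZMod 2) / #A) := by
      refine le_of_mul_le_mul_right (hcard.trans_eq ?_) hθ
      simp only [θ]; field_simp; ring
    have hcodim : (Fintype.card ι : ℝ) ≤
        Fintype.card b + Module.finrank (ZMod 2) (LinearMap.ker M.mulVecLin) := by
      exact_mod_cast M.card_le_card_add_finrank_ker
    linarith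

end Walsh

/-- Chang's theorem: if `A ⊆ 𝔽₂ⁿ` has density `α` and `|A+A| ≤ K|A|` then `A+A+A+A`
contains a subspace of codimension `O(K log(1/α))`. -/
theorem chang_fourfold_sumset_contains_subspace :
    ∃ C : ℝ, 0 < C ∧
      ∀ (n : ℕ) (A : Finset (Fin n → ZMod 2)) (K : ℝ), A.Nonempty → 1 ≤ K →
        ((A + A).card : ℝ) ≤ K * A.card →
        ∃ V : Submodule (ZMod 2) (Fin n → ZMod 2),
          (V : Set (Fin n → ZMod 2)) ⊆ (↑(A + A + A + A) : Set (Fin n → ZMod 2)) ∧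
          ((n : ℝ) - Module.finrank (ZMod 2) V) ≤
            C * K * Real.log (((A.card : ℝ) / 2 ^ n)⁻¹) + C := by
  refine ⟨8, by norm_num, fun n A K hA _ hAA ↦ ?_⟩
  obtain ⟨V, hV, hcodim⟩ := exists_submodule_subset_add_add_add_card_le hA hAA
  have hdensity : (Fintype.card (Fin n → ZMod 2) : ℝ) / #A = ((#A : ℝ) / 2 ^ n)⁻¹ := by
    simp [inv_div]
  rw [hdensity, Fintype.card_fin] at hcodim
  exact ⟨V, hV, by linarith⟩
end
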